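/- arXiv:1511.09273 — 6 statements merged into one kernel-verified Lean document; each statement's English description precedes it below -/
import Mathlib

section
/- Let n ∈ ℕ, and consider the deterministic control problem with value V_k^α = inf over β ∈ A_k(α) of Σ_{j=k}^{n-1} f̂_j(law(X_j^β), β̃_j) + ĝ(law(X_n^β)), where A_k(α) is the set of admissible feedback controls agreeing with α at times 0,…,k-1. If V_k^α > -∞ for all k and all admissible α, then the dynamic programming principle holds: V_n^α = ĝ(law(X_n^α)), and V_k^α = inf over β ∈ A_k(α) of [ f̂_k(law(X_k^β), β̃_k) + V_{k+1}^β ] for k = 0,…,n-1. -/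
open MeasureTheory

/-- Feedback control functions: measurable maps `E → A` with linear growth. -/
def FeedbackFn (E A : Type*) [NormedAddCommGroup E] [MeasurableSpace E]
    [NormedAddCommGroup A] [MeasurableSpace A] : Type _ :=
  {f : E → A // Measurable f ∧ ∃ C : ℝ, ∀ x, ‖f x‖ ≤ C * (1 + ‖x‖)}

variable {E A : Type*} [NormedAddCommGroup E] [MeasurableSpace E]
  [NormedAddCommGroup A] [MeasurableSpace A]

/-- The deterministic flow of marginal laws `k ↦ law(X_k^α)` generated by the one-step
transition `Φ` on measures, the initial law `μ₀` and a feedback control `α`. -/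
def lawFlow (Φ : ℕ → Measure E → FeedbackFn E A → Measure E) (μ₀ : Measure E)
    (α : ℕ → FeedbackFn E A) : ℕ → Measure E
  | 0 => μ₀
  | k + 1 => Φ (k + 1) (lawFlow Φ μ₀ α k) (α k)

/-- Cost from time `k` on: `Σ_{j=k}^{n-1} f̂_j(law(X_j^β), β̃_j) + ĝ(law(X_n^β))`. -/
def costFrom (Φ : ℕ → Measure E → FeedbackFn E A → Measure E) (μ₀ : Measure E)
    (fhat : ℕ → Measure E → FeedbackFn E A → ℝ) (ghat : Measure E → ℝ)
    (n k : ℕ) (β : ℕ → FeedbackFn E A) : ℝ :=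
  ∑ j ∈ Finset.Ico k n, fhat j (lawFlow Φ μ₀ β j) (β j) + ghat (lawFlow Φ μ₀ β n)

/-- The value at time `k` given a control `α`:
`V_k^α = inf {J_k(β) : β admissible, β_j = α_j for j < k}`. -/
noncomputable def valueAt (Φ : ℕ → Measure E → FeedbackFn E A → Measure E) (μ₀ : Measure E)
    (fhat : ℕ → Measure E → FeedbackFn E A → ℝ) (ghat : Measure E → ℝ)
    (n k : ℕ) (α : ℕ → FeedbackFn E A) : ℝ :=
  sInf {r | ∃ β : ℕ → FeedbackFn E A, (∀ j < k, β j = α j)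
              ∧ r = costFrom Φ μ₀ fhat ghat n k β}

/-- Dynamic programming principle: if `V_k^α > -∞` for all `k` and all admissible `α`, then
`V_n^α = ĝ(law(X_n^α))` and
`V_k^α = inf_{β ∈ A_k(α)} [ f̂_k(law(X_k^β), β̃_k) + V_{k+1}^β ]` for `k = 0,…,n-1`. -/
theorem dynamic_programming_principle
    (Φ : ℕ → Measure E → FeedbackFn E A → Measure E) (μ₀ : Measure E)
    (fhat : ℕ → Measure E → FeedbackFn E A → ℝ) (ghat : Measure E → ℝ) (n : ℕ)
    (hfin : ∀ k ≤ n, ∀ α : ℕ → FeedbackFn E A,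
      BddBelow {r | ∃ β : ℕ → FeedbackFn E A, (∀ j < k, β j = α j)
                      ∧ r = costFrom Φ μ₀ fhat ghat n k β}) :
    (∀ α : ℕ → FeedbackFn E A,
      valueAt Φ μ₀ fhat ghat n n α = ghat (lawFlow Φ μ₀ α n))
    ∧ (∀ k < n, ∀ α : ℕ → FeedbackFn E A,
      valueAt Φ μ₀ fhat ghat n k α
        = sInf {r | ∃ β : ℕ → FeedbackFn E A, (∀ j < k, β j = α j)
            ∧ r = fhat k (lawFlow Φ μ₀ β k) (β k) + valueAt Φ μ₀ fhat ghat n (k + 1) β}) := by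
  have hcongr : ∀ (β γ : ℕ → FeedbackFn E A) (k : ℕ), (∀ j < k, β j = γ j) →
      lawFlow Φ μ₀ β k = lawFlow Φ μ₀ γ k := by
    intro β γ k
    induction k with
    | zero => intro _; rfl
    | succ k ih =>
      intro h
      simp only [lawFlow]
      rw [ih (fun j hj => h j (hj.trans (Nat.lt_succ_self k))), h k (Nat.lt_succ_self k)]
  constructor
  · intro α
    have hset : {r | ∃ β : ℕ → FeedbackFn E A, (∀ j < n, β j = α j)
        ∧ r = costFrom Φ μ₀ fhat ghat n n β} = {ghat (lawFlow Φ μ₀ α n)} := by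
      ext r
      constructor
      · rintro ⟨β, hβ, rfl⟩
        simp [costFrom, hcongr β α n hβ]
      · rintro rfl
        exact ⟨α, fun _ _ => rfl, by simp [costFrom]⟩
    rw [valueAt, hset, csInf_singleton]
  · intro k hk α
    have hsplit : ∀ β : ℕ → FeedbackFn E A, costFrom Φ μ₀ fhat ghat n k β
        = fhat k (lawFlow Φ μ₀ β k) (β k) + costFrom Φ μ₀ fhat ghat n (k + 1) β := by
      intro β
      unfold costFrom
      rw [Finset.sum_eq_sum_Ico_succ_bot hk]
      ring
    set S1 := {r | ∃ β : ℕ → FeedbackFn E A, (∀ j < k, β j = α j)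
        ∧ r = costFrom Φ μ₀ fhat ghat n k β} with hS1def
    set S2 := {r | ∃ β : ℕ → FeedbackFn E A, (∀ j < k, β j = α j)
        ∧ r = fhat k (lawFlow Φ μ₀ β k) (β k) + valueAt Φ μ₀ fhat ghat n (k + 1) β} with hS2def
    have hS1ne : S1.Nonempty := ⟨_, α, fun _ _ => rfl, rfl⟩
    have hS2ne : S2.Nonempty := ⟨_, α, fun _ _ => rfl, rfl⟩
    have hbdd1 : BddBelow S1 := hfin k hk.le α
    -- every element of S2 dominates V_k
    have key1 : ∀ r ∈ S2, valueAt Φ μ₀ fhat ghat n k α ≤ r := by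
      rintro r ⟨β, hβ, rfl⟩
      have hTne : {r | ∃ γ : ℕ → FeedbackFn E A, (∀ j < k + 1, γ j = β j)
          ∧ r = costFrom Φ μ₀ fhat ghat n (k + 1) γ}.Nonempty :=
        ⟨_, β, fun _ _ => rfl, rfl⟩
      have hle : valueAt Φ μ₀ fhat ghat n k α - fhat k (lawFlow Φ μ₀ β k) (β k)
          ≤ valueAt Φ μ₀ fhat ghat n (k + 1) β := by
        refine le_csInf hTne ?_
        rintro t ⟨γ, hγ, rfl⟩
        have hγk : γ k = β k := hγ k (Nat.lt_succ_self k)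
        have hlaw : lawFlow Φ μ₀ γ k = lawFlow Φ μ₀ β k :=
          hcongr γ β k (fun j hj => hγ j (hj.trans (Nat.lt_succ_self k)))
        have hmem : costFrom Φ μ₀ fhat ghat n k γ ∈ S1 :=
          ⟨γ, fun j hj => (hγ j (hj.trans (Nat.lt_succ_self k))).trans (hβ j hj), rfl⟩
        have := csInf_le hbdd1 hmem
        rw [hsplit γ, hlaw, hγk] at this
        have h2 : valueAt Φ μ₀ fhat ghat n k α ≤ fhat k (lawFlow Φ μ₀ β k) (β k)
            + costFrom Φ μ₀ fhat ghat n (k + 1) γ := this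
        linarith
      linarith
    have hbdd2 : BddBelow S2 := ⟨valueAt Φ μ₀ fhat ghat n k α, key1⟩
    refine le_antisymm (le_csInf hS2ne key1) ?_
    refine le_csInf hS1ne ?_
    rintro r ⟨β, hβ, rfl⟩
    have h1 : valueAt Φ μ₀ fhat ghat n (k + 1) β ≤ costFrom Φ μ₀ fhat ghat n (k + 1) β :=
      csInf_le (hfin (k + 1) hk β) ⟨β, fun _ _ => rfl, rfl⟩
    have h2 : sInf S2 ≤ fhat k (lawFlow Φ μ₀ β k) (β k) + valueAt Φ μ₀ fhat ghat n (k + 1) β :=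
      csInf_le hbdd2 ⟨β, hβ, rfl⟩
    rw [hsplit β]
    linarith
end

section
/- Under the finiteness condition V_k^α > -∞ for all k and admissible α, the value V_k^α depends on α only through the marginal law: V_k^α = v_k(law(X_k^α)) for all k = 0,…,n and all admissible feedback controls α, where the value functions v_k on P₂(E) are defined by the backward recursion v_n(μ) = ĝ(μ) and v_k(μ) = inf over measurable linear-growth α̃ : E → A of [ f̂_k(μ, α̃) + v_{k+1}(Φ_{k+1}(μ, α̃)) ]. -/
open MeasureTheory

variable {E A : Type*} [NormedAddCommGroup E] [MeasurableSpace E]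
  [NormedAddCommGroup A] [MeasurableSpace A]

/-- The value functions on measures, defined by the backward recursion
`v_n(μ) = ĝ(μ)`, `v_k(μ) = inf_{α̃} [ f̂_k(μ,α̃) + v_{k+1}(Φ_{k+1}(μ,α̃)) ]`; here `valueFn m`
is the value function at time `k = n - m` (`m` steps remaining). -/
noncomputable def valueFn (Φ : ℕ → Measure E → FeedbackFn E A → Measure E)
    (fhat : ℕ → Measure E → FeedbackFn E A → ℝ) (ghat : Measure E → ℝ)
    (n : ℕ) : ℕ → Measure E → ℝ
  | 0, μ => ghat μ
  | m + 1, μ => sInf {r | ∃ a : FeedbackFn E A,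
      r = fhat (n - (m + 1)) μ a + valueFn Φ fhat ghat n m (Φ (n - m) μ a)}

/-- The flow at time `k` depends only on the control before time `k`. -/
lemma lawFlow_congr (Φ : ℕ → Measure E → FeedbackFn E A → Measure E) (μ₀ : Measure E)
    {α β : ℕ → FeedbackFn E A} : ∀ k, (∀ j < k, β j = α j) →
    lawFlow Φ μ₀ β k = lawFlow Φ μ₀ α k
  | 0, _ => rfl
  | k + 1, h => by
    simp only [lawFlow, lawFlow_congr Φ μ₀ k (fun j hj => h j (Nat.lt_succ_of_lt hj)),
      h k (Nat.lt_succ_self k)]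

/-- Splitting off the first-step cost. -/
lemma costFrom_succ (Φ : ℕ → Measure E → FeedbackFn E A → Measure E) (μ₀ : Measure E)
    (fhat : ℕ → Measure E → FeedbackFn E A → ℝ) (ghat : Measure E → ℝ)
    {n k : ℕ} (hk : k < n) (β : ℕ → FeedbackFn E A) :
    costFrom Φ μ₀ fhat ghat n k β
      = fhat k (lawFlow Φ μ₀ β k) (β k) + costFrom Φ μ₀ fhat ghat n (k + 1) β := by
  unfold costFrom
  rw [Finset.sum_eq_sum_Ico_succ_bot hk, add_assoc]

/-- Under the finiteness condition, the value `V_k^α` depends on the control only through the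
current marginal law: `V_k^α = v_k(law(X_k^α))`, where `(v_k)` solves the backward dynamic
programming recursion on `P₂(E)`. -/
theorem value_eq_valueFn_of_law
    (Φ : ℕ → Measure E → FeedbackFn E A → Measure E) (μ₀ : Measure E)
    (fhat : ℕ → Measure E → FeedbackFn E A → ℝ) (ghat : Measure E → ℝ) (n : ℕ)
    (hfin : ∀ k ≤ n, ∀ α : ℕ → FeedbackFn E A,
      BddBelow {r | ∃ β : ℕ → FeedbackFn E A, (∀ j < k, β j = α j)
                      ∧ r = costFrom Φ μ₀ fhat ghat n k β}) :
    ∀ α : ℕ → FeedbackFn E A, ∀ k ≤ n,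
      valueAt Φ μ₀ fhat ghat n k α
        = valueFn Φ fhat ghat n (n - k) (lawFlow Φ μ₀ α k) := by
  suffices H : ∀ m, ∀ k, k ≤ n → n - k = m → ∀ α : ℕ → FeedbackFn E A,
      valueAt Φ μ₀ fhat ghat n k α
        = valueFn Φ fhat ghat n m (lawFlow Φ μ₀ α k) by
    intro α k hk
    exact H (n - k) k hk rfl α
  intro m
  induction m with
  | zero =>
    intro k hk hm α
    have hkn : k = n := by omega
    subst hkn
    have hset : {r | ∃ β : ℕ → FeedbackFn E A, (∀ j < k, β j = α j)
        ∧ r = costFrom Φ μ₀ fhat ghat k k β} = {ghat (lawFlow Φ μ₀ α k)} := by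
      ext r
      constructor
      · rintro ⟨β, hβ, rfl⟩
        simp [costFrom, lawFlow_congr Φ μ₀ k hβ]
      · rintro rfl
        exact ⟨α, fun j _ => rfl, by simp [costFrom]⟩
    rw [valueAt, hset, csInf_singleton]
    rfl
  | succ m ih =>
    intro k hk hm α
    have hkn : k < n := by omega
    set μ := lawFlow Φ μ₀ α k with hμ
    -- the updated control
    set upd : FeedbackFn E A → ℕ → FeedbackFn E A := fun a => Function.update α k a with hupd
    have hupd_lt : ∀ a, ∀ j < k, upd a j = α j := by
      intro a j hj
      simp [hupd, Function.update_of_ne (Nat.ne_of_lt hj)]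
    have hupd_k : ∀ a, upd a k = a := by
      intro a; simp [hupd]
    have hflow_upd : ∀ a, lawFlow Φ μ₀ (upd a) (k + 1) = Φ (k + 1) μ a := by
      intro a
      show Φ (k + 1) (lawFlow Φ μ₀ (upd a) k) (upd a k) = Φ (k + 1) μ a
      rw [lawFlow_congr Φ μ₀ k (hupd_lt a), hupd_k]
    have hIH : ∀ a, valueAt Φ μ₀ fhat ghat n (k + 1) (upd a)
        = valueFn Φ fhat ghat n m (Φ (k + 1) μ a) := by
      intro a
      rw [ih (k + 1) (by omega) (by omega) (upd a), hflow_upd]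
    -- rewrite the recursion indices
    have hn1 : n - (m + 1) = k := by omega
    have hn2 : n - m = k + 1 := by omega
    have hT : valueFn Φ fhat ghat n (m + 1) μ
        = sInf {r | ∃ a : FeedbackFn E A,
            r = fhat k μ a + valueAt Φ μ₀ fhat ghat n (k + 1) (upd a)} := by
      show sInf _ = _
      congr 1
      ext r
      simp only [Set.mem_setOf_eq, hn1, hn2, hIH]
    -- the set defining valueAt at time k
    set S : Set ℝ := {r | ∃ β : ℕ → FeedbackFn E A, (∀ j < k, β j = α j)
        ∧ r = costFrom Φ μ₀ fhat ghat n k β} with hS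
    have hSbdd : BddBelow S := hfin k hk α
    have hSne : S.Nonempty := ⟨costFrom Φ μ₀ fhat ghat n k α, α, fun j _ => rfl, rfl⟩
    -- Claim 1 : valueAt k α ≤ fhat k μ a + valueAt (k+1) (upd a)
    have claim1 : ∀ a : FeedbackFn E A,
        valueAt Φ μ₀ fhat ghat n k α
          ≤ fhat k μ a + valueAt Φ μ₀ fhat ghat n (k + 1) (upd a) := by
      intro a
      have hne : {r | ∃ β : ℕ → FeedbackFn E A, (∀ j < k + 1, β j = upd a j)
          ∧ r = costFrom Φ μ₀ fhat ghat n (k + 1) β}.Nonempty :=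
        ⟨costFrom Φ μ₀ fhat ghat n (k + 1) (upd a), upd a, fun j _ => rfl, rfl⟩
      have hlow : ∀ r ∈ {r | ∃ β : ℕ → FeedbackFn E A, (∀ j < k + 1, β j = upd a j)
          ∧ r = costFrom Φ μ₀ fhat ghat n (k + 1) β},
          valueAt Φ μ₀ fhat ghat n k α - fhat k μ a ≤ r := by
        rintro r ⟨β, hβ, rfl⟩
        have hβα : ∀ j < k, β j = α j := by
          intro j hj
          rw [hβ j (by omega), hupd_lt a j hj]
        have hβk : β k = a := by rw [hβ k (by omega), hupd_k]
        have hflow : lawFlow Φ μ₀ β k = μ := lawFlow_congr Φ μ₀ k hβα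
        have hmem : costFrom Φ μ₀ fhat ghat n k β ∈ S := ⟨β, hβα, rfl⟩
        have h1 : valueAt Φ μ₀ fhat ghat n k α ≤ costFrom Φ μ₀ fhat ghat n k β :=
          csInf_le hSbdd hmem
        have h2 := costFrom_succ Φ μ₀ fhat ghat hkn β
        rw [hflow, hβk] at h2
        linarith
      have := le_csInf hne hlow
      have heq : valueAt Φ μ₀ fhat ghat n (k + 1) (upd a)
          = sInf {r | ∃ β : ℕ → FeedbackFn E A, (∀ j < k + 1, β j = upd a j)
              ∧ r = costFrom Φ μ₀ fhat ghat n (k + 1) β} := rfl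
      rw [heq]
      linarith
    -- the target set
    set T : Set ℝ := {r | ∃ a : FeedbackFn E A,
        r = fhat k μ a + valueAt Φ μ₀ fhat ghat n (k + 1) (upd a)} with hTdef
    have hTne : T.Nonempty := ⟨_, α k, rfl⟩
    have hTbdd : BddBelow T := by
      refine ⟨valueAt Φ μ₀ fhat ghat n k α, ?_⟩
      rintro r ⟨a, rfl⟩
      exact claim1 a
    rw [hT]
    apply le_antisymm
    · exact le_csInf hTne (by rintro r ⟨a, rfl⟩; exact claim1 a)
    · -- sInf T ≤ valueAt k α = sInf S
      refine le_csInf hSne ?_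
      rintro r ⟨β, hβ, rfl⟩
      have hβ1 : ∀ j < k + 1, β j = upd (β k) j := by
        intro j hj
        rcases Nat.lt_or_ge j k with h | h
        · rw [hupd_lt (β k) j h, hβ j h]
        · have : j = k := by omega
          subst this
          rw [hupd_k]
      have hmem : costFrom Φ μ₀ fhat ghat n (k + 1) β
          ∈ {r | ∃ γ : ℕ → FeedbackFn E A, (∀ j < k + 1, γ j = upd (β k) j)
              ∧ r = costFrom Φ μ₀ fhat ghat n (k + 1) γ} := ⟨β, hβ1, rfl⟩
      have h1 : valueAt Φ μ₀ fhat ghat n (k + 1) (upd (β k))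
          ≤ costFrom Φ μ₀ fhat ghat n (k + 1) β :=
        csInf_le (hfin (k + 1) (by omega) (upd (β k))) hmem
      have h2 : sInf T ≤ fhat k μ (β k) + valueAt Φ μ₀ fhat ghat n (k + 1) (upd (β k)) :=
        csInf_le hTbdd ⟨β k, rfl⟩
      have h3 := costFrom_succ Φ μ₀ fhat ghat hkn β
      rw [lawFlow_congr Φ μ₀ k hβ] at h3
      rw [← hμ] at h3
      linarith
end

section
/- Let A be a bounded subset of ℝ^m, E = ℝ^d, μ a probability measure on E, and w : E × A → ℝ measurable with x ↦ inf_{a∈A} w(x,a) μ-integrable and w(x,·) bounded below uniformly for μ-a.e. x. Then the infimum over measurable selections commutes with integration: inf over measurable α̃ : E → A of ∫_E w(x, α̃(x)) μ(dx) = ∫_E inf_{a ∈ A} w(x,a) μ(dx). -/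
/-!
The inequality `≥` holds pointwise under the integral. For `≤`, fix `ε > 0`: the Borel set
`S = {(x, a) | a ∈ A, w x a < inf_A w x + ε}` has nonempty sections for a.e. `x`, so everything
reduces to an a.e. measurable selection of an analytic set `S = h(ℕ^ℕ)`, `h` continuous.
Countable additivity and outer regularity give a compact box `K = {z ≤ σ}` whose image
`fst (h K)` exhausts `fst S` up to measure `δ`; over this image the lexicographically least
`z ∈ K` with `fst (h z) = x` depends measurably on `x`, since its digits are read off the compact
sets `fst (h (K ∩ cylinder))`. Gluing the selections for `δ = 1/n` gives an a.e. selection.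
-/

open MeasureTheory

/-- Measurable selections valued in `A` along which `w` is integrable. -/
def AdmissibleSelection {d m : ℕ} (A : Set (Fin m → ℝ)) (μ : Measure (Fin d → ℝ))
    (w : (Fin d → ℝ) → (Fin m → ℝ) → ℝ) : Type _ :=
  {f : (Fin d → ℝ) → (Fin m → ℝ) //
    Measurable f ∧ (∀ x, f x ∈ A) ∧ Integrable (fun x => w x (f x)) μ}

open Set Filter Topology PiNat Function
open scoped ENNReal

section LexMinSelection

variable {X : Type*}

lemma measurable_sInf_setOf_mem [MeasurableSpace X] {T : ℕ → Set X}
    (hT : ∀ j, MeasurableSet (T j)) : Measurable fun x => sInf {j | x ∈ T j} := by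
  refine measurable_of_Iic fun n => ?_
  have : (fun x => sInf {j | x ∈ T j}) ⁻¹' Iic n = (⋃ j ≤ n, T j) ∪ (⋃ j, T j)ᶜ := by
    ext x
    rcases eq_empty_or_nonempty {j | x ∈ T j} with hx | hx
    · have hx' : ∀ j, x ∉ T j := fun j hj => hx.subset hj
      simp [hx']
    · simp only [mem_preimage, mem_Iic, mem_union, mem_iUnion, exists_prop, mem_compl_iff]
      refine ⟨fun h => .inl ⟨_, h, Nat.sInf_mem hx⟩, ?_⟩
      rintro (⟨j, hjn, hj⟩ | h)
      · exact (Nat.sInf_le hj).trans hjn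
      · exact absurd hx h
  rw [this]
  exact (MeasurableSet.biUnion (to_countable _) fun j _ => hT j).union (.compl (.iUnion hT))

lemma Measurable.comp_of_countable_range [MeasurableSpace X] {α β : Type*} [MeasurableSpace α]
    [MeasurableSingletonClass α] [MeasurableSpace β] {f : X → α} (hf : Measurable f)
    (hfc : (range f).Countable) {g : α → X → β} (hg : ∀ a, Measurable (g a)) :
    Measurable fun x => g (f x) x := by
  have : Countable (range f) := hfc.to_subtype
  have : Measurable fun p : X × range f => g p.2 p.1 :=
    measurable_from_prod_countable_left fun a => hg a
  exact this.comp (measurable_id.prodMk (hf.subtype_mk (h := mem_range_self)))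

lemma PiNat.tendsto_of_mem_cylinder {E : ℕ → Type*} [∀ n, TopologicalSpace (E n)]
    {z : ℕ → ∀ n, E n} {y : ∀ n, E n} (h : ∀ k, z k ∈ cylinder y k) :
    Tendsto z atTop (𝓝 y) :=
  tendsto_pi_nhds.2 fun i => tendsto_const_nhds.congr' <|
    (eventually_gt_atTop i).mono fun k hk => (h k i hk).symm

lemma PiNat.isClosed_cylinder {E : ℕ → Type*} [∀ n, TopologicalSpace (E n)]
    [∀ n, T1Space (E n)] (x : ∀ n, E n) (n : ℕ) : IsClosed (cylinder x n) := by
  rw [cylinder_eq_pi]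
  exact isClosed_set_pi fun i _ => isClosed_singleton

variable (F : (ℕ → ℕ) → X) (K : Set (ℕ → ℕ))

/-- The first `k` digits, padded with zeros, of the lexicographically least `z ∈ K` with
`F z = x`: digit `k` is the least `j` keeping `x` in the image of the cylinder so far. -/
noncomputable def lexMinPrefix : ℕ → X → ℕ → ℕ
  | 0 => fun _ => 0
  | k + 1 => fun x =>
    update (lexMinPrefix k x) k
      (sInf {j | x ∈ F '' (K ∩ cylinder (update (lexMinPrefix k x) k j) (k + 1))})

noncomputable def lexMinSelection (x : X) : ℕ → ℕ := fun k => lexMinPrefix F K (k + 1) x k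

variable {F K}

lemma lexMinPrefix_mem_cylinder (x : X) {k l : ℕ} (hkl : k ≤ l) :
    lexMinPrefix F K l x ∈ cylinder (lexMinPrefix F K k x) k := by
  induction l, hkl using Nat.le_induction with
  | base => exact self_mem_cylinder _ _
  | succ l hkl ih =>
    have hstep : lexMinPrefix F K (l + 1) x ∈ cylinder (lexMinPrefix F K l x) l :=
      update_mem_cylinder _ _ _
    exact fun i hi => (hstep i (hi.trans_le hkl)).trans (ih i hi)

lemma lexMinSelection_mem_cylinder (x : X) (k : ℕ) :
    lexMinSelection F K x ∈ cylinder (lexMinPrefix F K k x) k :=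
  fun i hi => (lexMinPrefix_mem_cylinder x hi i (Nat.lt_succ_self i)).symm

lemma mem_image_inter_cylinder_lexMinPrefix {x : X} (hx : x ∈ F '' K) (k : ℕ) :
    x ∈ F '' (K ∩ cylinder (lexMinPrefix F K k x) k) := by
  induction k with
  | zero => simpa [cylinder_zero] using hx
  | succ k ih =>
    have hne :
        {j | x ∈ F '' (K ∩ cylinder (update (lexMinPrefix F K k x) k j) (k + 1))}.Nonempty := by
      rw [← iUnion_cylinder_update, inter_iUnion, image_iUnion] at ih
      exact mem_iUnion.1 ih
    exact Nat.sInf_mem hne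

lemma lexMinSelection_spec [TopologicalSpace X] [T2Space X] (hK : IsClosed K)
    (hF : Continuous F) {x : X} (hx : x ∈ F '' K) :
    lexMinSelection F K x ∈ K ∧ F (lexMinSelection F K x) = x := by
  choose z hz hzx using fun k => mem_image_inter_cylinder_lexMinPrefix hx k
  have hlim : Tendsto z atTop (𝓝 (lexMinSelection F K x)) := by
    refine tendsto_of_mem_cylinder fun k => ?_
    rw [mem_cylinder_iff_eq.1 (lexMinSelection_mem_cylinder x k)]
    exact (hz k).2
  exact ⟨hK.mem_of_tendsto hlim (.of_forall fun k => (hz k).1),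
    tendsto_nhds_unique ((hF.tendsto _).comp hlim) (by simp [Function.comp_def, hzx])⟩

variable [TopologicalSpace X] [T2Space X] [MeasurableSpace X] [OpensMeasurableSpace X]

lemma measurable_lexMinPrefix_and_countable_range (hK : IsCompact K) (hF : Continuous F) (k : ℕ) :
    Measurable (lexMinPrefix F K k) ∧ (range (lexMinPrefix F K k)).Countable := by
  induction k with
  | zero => exact ⟨measurable_const, (countable_singleton 0).mono (range_const_subset)⟩
  | succ k ih =>
    have hstep (s : ℕ → ℕ) : Measurable fun x =>
        update s k (sInf {j | x ∈ F '' (K ∩ cylinder (update s k j) (k + 1))}) :=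
      (measurable_update s).comp <| measurable_sInf_setOf_mem fun j =>
        ((hK.inter_right (isClosed_cylinder _ _)).image hF).isClosed.measurableSet
    refine ⟨ih.1.comp_of_countable_range ih.2 hstep, ?_⟩
    refine (ih.2.biUnion fun s _ => countable_range (update s k)).mono ?_
    rintro _ ⟨x, rfl⟩
    exact mem_biUnion (mem_range_self x) (mem_range_self _)

theorem IsCompact.exists_measurable_rightInvOn (hK : IsCompact K) (hF : Continuous F) :
    ∃ g : X → ℕ → ℕ, Measurable g ∧ MapsTo g (F '' K) K ∧ RightInvOn g F (F '' K) :=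
  ⟨lexMinSelection F K,
    measurable_pi_lambda _ fun k =>
      (measurable_pi_apply k).comp (measurable_lexMinPrefix_and_countable_range hK hF _).1,
    fun _ hx => (lexMinSelection_spec hK.isClosed hF hx).1,
    fun _ hx => (lexMinSelection_spec hK.isClosed hF hx).2⟩

end LexMinSelection

section Capacitability

lemma Monotone.exists_measure_iUnion_le_add {α : Type*} [MeasurableSpace α] {μ : Measure α}
    {s : ℕ → Set α} (hs : Monotone s) (hμ : μ (⋃ n, s n) ≠ ∞) {ε : ℝ≥0∞} (hε : ε ≠ 0) :
    ∃ n, μ (⋃ n, s n) ≤ μ (s n) + ε :=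
  (((tendsto_measure_iUnion_atTop hs).add_const ε).eventually_const_lt
    (ENNReal.lt_add_right hμ hε)).exists.imp fun _ hn => hn.le

lemma isCompact_Iic_nat (σ : ℕ → ℕ) : IsCompact (Iic σ) :=
  Icc_bot (a := σ) ▸ isCompact_Icc

lemma exists_setOf_forall_lt_le_subset {σ : ℕ → ℕ} {V : Set (ℕ → ℕ)} (hV : IsOpen V)
    (hσV : Iic σ ⊆ V) : ∃ k, {z | ∀ i < k, z i ≤ σ i} ⊆ V := by
  by_contra! h
  choose z hzσ hzV using fun k => not_subset.1 (h k)
  obtain ⟨a, haσ, φ, hφ, hlim⟩ :=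
    (isCompact_Iic_nat σ).tendsto_subseq fun k => (inf_le_right : z k ⊓ σ ≤ σ)
  have hzlim : Tendsto (z ∘ φ) atTop (𝓝 a) := by
    refine tendsto_pi_nhds.2 fun i => ((tendsto_pi_nhds.1 hlim) i).congr' ?_
    filter_upwards [eventually_gt_atTop i] with j hj
    exact min_eq_left (hzσ (φ j) i (hj.trans_le hφ.le_apply))
  obtain ⟨j, hj⟩ := (hzlim.eventually (hV.mem_nhds (hσV haσ))).exists
  exact hzV (φ j) hj

variable {X : Type*} [MeasurableSpace X]

lemma exists_forall_measure_range_le_image_add (μ : Measure X) [IsFiniteMeasure μ]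
    (F : (ℕ → ℕ) → X) {δ : ℝ≥0∞} (hδ : δ ≠ 0) :
    ∃ σ : ℕ → ℕ, ∀ k, μ (range F) ≤ μ (F '' {z | ∀ i < k, z i ≤ σ i}) + δ := by
  obtain ⟨ε, hε0, hεδ⟩ := ENNReal.exists_pos_sum_of_countable hδ ℕ
  have hstep (C : Set (ℕ → ℕ)) (k : ℕ) :
      ∃ n, μ (F '' C) ≤ μ (F '' (C ∩ {z | z k ≤ n})) + ε k := by
    have hmono : Monotone fun n => F '' (C ∩ {z | z k ≤ n}) :=
      fun n n' hn => image_mono (inter_subset_inter_right _ fun z hz => le_trans hz hn)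
    have hunion : ⋃ n, F '' (C ∩ {z | z k ≤ n}) = F '' C := by
      rw [← image_iUnion, ← inter_iUnion,
        iUnion_eq_univ_iff.2 fun z => ⟨z k, show z k ≤ z k from le_rfl⟩, inter_univ]
    simpa only [hunion] using
      hmono.exists_measure_iUnion_le_add (measure_ne_top _ _) (ENNReal.coe_ne_zero.2 (hε0 k).ne')
  choose n hn using hstep
  let C : ℕ → Set (ℕ → ℕ) := fun k => Nat.rec univ (fun k Ck => Ck ∩ {z | z k ≤ n Ck k}) k
  have hμC (k : ℕ) : μ (range F) ≤ μ (F '' C k) + ∑ i ∈ Finset.range k, (ε i : ℝ≥0∞) := by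
    induction k with
    | zero => simp [C]
    | succ k ih =>
      rw [Finset.sum_range_succ, ← add_assoc, add_right_comm]
      exact ih.trans (by gcongr; exact hn (C k) k)
  have hC (k : ℕ) : C k ⊆ {z | ∀ i < k, z i ≤ n (C i) i} := by
    induction k with
    | zero => simp
    | succ k ih =>
      rintro z ⟨hz, hzk⟩ i hi
      rcases Nat.lt_succ_iff_lt_or_eq.1 hi with hi | rfl
      exacts [ih hz i hi, hzk]
  refine ⟨fun k => n (C k) k, fun k => (hμC k).trans ?_⟩
  gcongr
  exacts [hC k, (ENNReal.sum_le_tsum _).trans hεδ.le]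

theorem exists_measure_range_le_image_Iic_add [TopologicalSpace X] (μ : Measure X)
    [IsFiniteMeasure μ] [μ.OuterRegular] {F : (ℕ → ℕ) → X} (hF : Continuous F) {δ : ℝ≥0∞}
    (hδ : δ ≠ 0) :
    ∃ σ : ℕ → ℕ, μ (range F) ≤ μ (F '' Iic σ) + δ := by
  obtain ⟨σ, hσ⟩ := exists_forall_measure_range_le_image_add μ F (ENNReal.half_pos hδ).ne'
  obtain ⟨U, hσU, hU, hμU⟩ := (F '' Iic σ).exists_isOpen_le_add μ (ENNReal.half_pos hδ).ne'
  obtain ⟨k, hk⟩ := exists_setOf_forall_lt_le_subset (hU.preimage hF) (image_subset_iff.1 hσU)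
  refine ⟨σ, ?_⟩
  calc μ (range F) ≤ μ (F '' {z | ∀ i < k, z i ≤ σ i}) + δ / 2 := hσ k
    _ ≤ μ U + δ / 2 := by gcongr; exact image_subset_iff.2 hk
    _ ≤ μ (F '' Iic σ) + δ / 2 + δ / 2 := by gcongr
    _ = μ (F '' Iic σ) + δ := by rw [add_assoc, ENNReal.add_halves]

end Capacitability

section MeasurableSelection

variable {X Y : Type*} [TopologicalSpace X] [T2Space X] [MeasurableSpace X]
  [OpensMeasurableSpace X] [TopologicalSpace Y] [MeasurableSpace Y] [BorelSpace Y]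
  [Nonempty Y] {S : Set (X × Y)}

lemma MeasureTheory.AnalyticSet.exists_measurable_selection_measure_diff_le (hS : AnalyticSet S)
    (μ : Measure X) [IsFiniteMeasure μ] [μ.OuterRegular] {δ : ℝ≥0∞} (hδ : δ ≠ 0) :
    ∃ (G : Set X) (β : X → Y), MeasurableSet G ∧ Measurable β ∧ (∀ x ∈ G, (x, β x) ∈ S) ∧
      μ (Prod.fst '' S \ G) ≤ δ := by
  rw [AnalyticSet] at hS
  rcases hS with rfl | ⟨h, hh, rfl⟩
  · exact ⟨∅, fun _ => Classical.arbitrary Y, .empty, measurable_const, by simp, by simp⟩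
  have hF : Continuous (Prod.fst ∘ h) := continuous_fst.comp hh
  obtain ⟨σ, hσ⟩ := exists_measure_range_le_image_Iic_add μ hF hδ
  obtain ⟨g, hg, -, hgF⟩ := (isCompact_Iic_nat σ).exists_measurable_rightInvOn hF
  have hG : MeasurableSet (Prod.fst ∘ h '' Iic σ) :=
    ((isCompact_Iic_nat σ).image hF).isClosed.measurableSet
  refine ⟨_, Prod.snd ∘ h ∘ g, hG, (continuous_snd.comp hh).measurable.comp hg,
    fun x hx => ?_, ?_⟩
  · have : h (g x) = (x, (h (g x)).2) := Prod.ext (hgF hx) rfl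
    exact this ▸ mem_range_self _
  · rw [← range_comp, measure_sdiff_le_iff_le_add hG.nullMeasurableSet
      (image_subset_range _ _) (measure_ne_top _ _)]
    exact hσ

theorem MeasureTheory.AnalyticSet.exists_measurable_ae_selection (hS : AnalyticSet S)
    (μ : Measure X) [IsFiniteMeasure μ] [μ.OuterRegular] :
    ∃ β : X → Y, Measurable β ∧ ∀ᵐ x ∂μ, x ∈ Prod.fst '' S → (x, β x) ∈ S := by
  choose G β hG hβ hGS hμG using fun n : ℕ =>
    hS.exists_measurable_selection_measure_diff_le μ
      (ENNReal.inv_ne_zero.2 (ENNReal.natCast_ne_top n))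
  classical
  -- the second disjunct makes `Nat.find` total; off `⋃ n, G n` it picks `β 0`
  have hfirst (x : X) : ∃ n, x ∈ G n ∨ x ∉ ⋃ n, G n := by
    by_cases hx : x ∈ ⋃ n, G n
    · exact (mem_iUnion.1 hx).imp fun _ => .inl
    · exact ⟨0, .inr hx⟩
  refine ⟨fun x => β (Nat.find (hfirst x)) x,
    Measurable.find (p := fun n x => x ∈ G n ∨ x ∉ ⋃ n, G n) hβ
      (fun n => (hG n).union (MeasurableSet.iUnion hG).compl) hfirst, ?_⟩
  have hnull : μ (Prod.fst '' S \ ⋃ n, G n) = 0 := by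
    by_contra h
    obtain ⟨n, hn⟩ := ENNReal.exists_inv_nat_lt h
    exact hn.not_ge
      ((measure_mono (sdiff_subset_sdiff_right (subset_iUnion G n))).trans (hμG n))
  refine ae_iff.2 (measure_mono_null (fun x hx => ?_) hnull)
  rw [mem_ofPred_eq, Classical.not_imp] at hx
  refine ⟨hx.1, fun hxG => hx.2 ?_⟩
  exact hGS _ x ((Nat.find_spec (hfirst x)).resolve_right (not_not.2 hxG))

end MeasurableSelection

theorem exists_measurable_ae_lt_iInf_add {X Y : Type*} [TopologicalSpace X] [PolishSpace X]
    [MeasurableSpace X] [BorelSpace X] [TopologicalSpace Y] [PolishSpace Y] [MeasurableSpace Y]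
    [BorelSpace Y] (μ : Measure X) [IsFiniteMeasure μ] {A : Set Y} (hA : A.Nonempty)
    (hAmeas : MeasurableSet A) {w : X → Y → ℝ} (hw : Measurable fun p : X × Y => w p.1 p.2)
    (hinf : AEMeasurable (fun x => ⨅ a : A, w x a) μ) {ε : ℝ} (hε : 0 < ε) :
    ∃ α : X → Y, Measurable α ∧ (∀ x, α x ∈ A) ∧
      ∀ᵐ x ∂μ, w x (α x) < (⨅ a : A, w x a) + ε := by
  obtain ⟨a₀, ha₀⟩ := hA
  have : Nonempty A := ⟨⟨a₀, ha₀⟩⟩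
  have : Nonempty Y := ⟨a₀⟩
  let S := {p : X × Y | p.2 ∈ A ∧ w p.1 p.2 < hinf.mk _ p.1 + ε}
  have hS : MeasurableSet S := (hAmeas.preimage measurable_snd).inter
    (measurableSet_lt hw ((hinf.measurable_mk.comp measurable_fst).add_const ε))
  obtain ⟨β, hβ, hβS⟩ := hS.analyticSet.exists_measurable_ae_selection μ
  classical
  refine ⟨fun x => if β x ∈ A then β x else a₀, .ite (hβ hAmeas) hβ measurable_const,
    fun x => by dsimp only; split_ifs with h; exacts [h, ha₀], ?_⟩
  filter_upwards [hβS, hinf.ae_eq_mk] with x hxS hx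
  obtain ⟨a, ha⟩ := exists_lt_of_ciInf_lt (lt_add_of_pos_right (⨅ a : A, w x a) hε)
  obtain ⟨hβA, hβlt⟩ := hxS ⟨(x, a), ⟨a.2, hx ▸ ha⟩, rfl⟩
  simpa only [if_pos hβA, hx] using hβlt

theorem integral_iInf_le_integral {X Y : Type*} [MeasurableSpace X] {μ : Measure X} {A : Set Y}
    {w : X → Y → ℝ} (hinf : Integrable (fun x => ⨅ a : A, w x a) μ)
    (hbd : ∃ c : ℝ, ∀ᵐ x ∂μ, ∀ a ∈ A, c ≤ w x a) {α : X → Y} (hαA : ∀ x, α x ∈ A)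
    (hα : Integrable (fun x => w x (α x)) μ) :
    ∫ x, (⨅ a : A, w x a) ∂μ ≤ ∫ x, w x (α x) ∂μ := by
  obtain ⟨c, hc⟩ := hbd
  refine integral_mono_ae hinf hα ?_
  filter_upwards [hc] with x hx
  refine ciInf_le ⟨c, ?_⟩ (⟨α x, hαA x⟩ : A)
  rintro _ ⟨a, rfl⟩
  exact hx a a.2

theorem exists_admissibleSelection_integral_le {d m : ℕ} {A : Set (Fin m → ℝ)}
    (hA : A.Nonempty) (hAmeas : MeasurableSet A) (μ : Measure (Fin d → ℝ))
    [IsProbabilityMeasure μ] {w : (Fin d → ℝ) → (Fin m → ℝ) → ℝ}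
    (hw : Measurable fun p : (Fin d → ℝ) × (Fin m → ℝ) => w p.1 p.2)
    (hint : Integrable (fun x => ⨅ a : A, w x a) μ)
    (hbd : ∃ c : ℝ, ∀ᵐ x ∂μ, ∀ a ∈ A, c ≤ w x a) {ε : ℝ} (hε : 0 < ε) :
    ∃ α : AdmissibleSelection A μ w, ∫ x, w x (α.1 x) ∂μ ≤ ∫ x, (⨅ a : A, w x a) ∂μ + ε := by
  obtain ⟨c, hc⟩ := hbd
  obtain ⟨α, hα, hαA, hαε⟩ :=
    exists_measurable_ae_lt_iInf_add μ hA hAmeas hw hint.aemeasurable hε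
  have hle : (fun x => w x (α x)) ≤ᵐ[μ] fun x => (⨅ a : A, w x a) + ε :=
    hαε.mono fun _ h => h.le
  have hint' : Integrable (fun x => (⨅ a : A, w x a) + ε) μ := hint.add (integrable_const ε)
  have hαint : Integrable (fun x => w x (α x)) μ :=
    integrable_of_le_of_le (hw.comp (measurable_id.prodMk hα)).aestronglyMeasurable
      (hc.mono fun x hx => hx _ (hαA x)) hle (integrable_const c) hint'
  refine ⟨⟨α, hα, hαA, hαint⟩, (integral_mono_ae hαint hint' hle).trans_eq ?_⟩
  rw [integral_add hint (integrable_const ε), integral_const, probReal_univ, one_smul]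

theorem inf_integral_eq_integral_inf_general {d m : ℕ}
    (A : Set (Fin m → ℝ)) (hA : A.Nonempty)
    (hAmeas : MeasurableSet A)
    (μ : Measure (Fin d → ℝ)) [IsProbabilityMeasure μ]
    (w : (Fin d → ℝ) → (Fin m → ℝ) → ℝ)
    (hw : Measurable (fun p : (Fin d → ℝ) × (Fin m → ℝ) => w p.1 p.2))
    (hint : Integrable (fun x => ⨅ a : A, w x (a : Fin m → ℝ)) μ)
    (hbd : ∃ c : ℝ, ∀ᵐ x ∂μ, ∀ a ∈ A, c ≤ w x a) :
    (⨅ α : AdmissibleSelection A μ w, ∫ x, w x (α.1 x) ∂μ)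
      = ∫ x, (⨅ a : A, w x (a : Fin m → ℝ)) ∂μ := by
  have hlow (α : AdmissibleSelection A μ w) :
      ∫ x, (⨅ a : A, w x a) ∂μ ≤ ∫ x, w x (α.1 x) ∂μ :=
    integral_iInf_le_integral hint hbd α.2.2.1 α.2.2.2
  have hopt (ε : ℝ) (hε : 0 < ε) :=
    exists_admissibleSelection_integral_le hA hAmeas μ hw hint hbd hε
  have : Nonempty (AdmissibleSelection A μ w) := ⟨(hopt 1 one_pos).choose⟩
  refine le_antisymm (le_of_forall_pos_le_add fun ε hε => ?_) (le_ciInf hlow)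
  obtain ⟨α, hα⟩ := hopt ε hε
  exact ciInf_le_of_le ⟨_, forall_mem_range.2 hlow⟩ α hα

/-- Measurable-selection interchange lemma: for a bounded control set `A ⊆ ℝ^m`, a probability
measure `μ` on `ℝ^d` and a jointly measurable `w : ℝ^d × A → ℝ` with `x ↦ inf_{a∈A} w(x,a)`
`μ`-integrable and `w(x,·)` bounded below uniformly for `μ`-a.e. `x`, the infimum over
measurable selections commutes with the integral:
`inf_{α̃ : ℝ^d → A measurable} ∫ w(x, α̃(x)) μ(dx) = ∫ inf_{a ∈ A} w(x,a) μ(dx)`. -/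
theorem inf_integral_eq_integral_inf {d m : ℕ}
    (A : Set (Fin m → ℝ)) (hA : A.Nonempty) (hAbd : Bornology.IsBounded A)
    (hAmeas : MeasurableSet A)
    (μ : Measure (Fin d → ℝ)) [IsProbabilityMeasure μ]
    (w : (Fin d → ℝ) → (Fin m → ℝ) → ℝ)
    (hw : Measurable (fun p : (Fin d → ℝ) × (Fin m → ℝ) => w p.1 p.2))
    (hint : Integrable (fun x => ⨅ a : A, w x (a : Fin m → ℝ)) μ)
    (hbd : ∃ c : ℝ, ∀ᵐ x ∂μ, ∀ a ∈ A, c ≤ w x a) :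
    (⨅ α : AdmissibleSelection A μ w, ∫ x, w x (α.1 x) ∂μ)
      = ∫ x, (⨅ a : A, w x (a : Fin m → ℝ)) ∂μ :=
  inf_integral_eq_integral_inf_general A hA hAmeas μ w hw hint hbd
end

section
/- In the linear-quadratic McKean-Vlasov transition μ ↦ Φ_{k+1}(μ, α̃), where Φ_{k+1}(μ,α̃) is the law of (B x + B̄ μ̄ + C α̃(x) + C̄ λ̄) + (D x + D̄ μ̄ + H α̃(x) + H̄ λ̄) ε with x ∼ μ, λ̄ = mean of α̃⋆μ, ε ∼ N(0,1) independent, the mean satisfies mean(Φ_{k+1}(μ,α̃)) = (B + B̄) μ̄ + (C + C̄) λ̄, and for any symmetric matrix Λ, Var(Φ_{k+1}(μ,α̃))(Λ) = Var(μ)(BᵀΛB + DᵀΛD) + μ̄ᵀ(D+D̄)ᵀΛ(D+D̄)μ̄ + Var(α̃⋆μ)(HᵀΛH + CᵀΛC) + λ̄ᵀ(H+H̄)ᵀΛ(H+H̄)λ̄ + 2∫(x−μ̄)ᵀ(DᵀΛH + BᵀΛC)α̃(x)μ(dx) + 2μ̄ᵀ(D+D̄)ᵀΛ(H+H̄)λ̄.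 -/
/-!
Realise `Φ` as the image of `μ ⊗ N(0,1)` under `(x, e) ↦ a x + e • b x`, where `a` and `b` are the
drift and volatility. As the noise has mean `0` and second moment `1`, `Φ` has mean `∫ a dμ` and
`Λ`-variance `Var(a⋆μ)(Λ) + ∫ bᵀΛb dμ`. Centring, `a - ā = B(x - μ̄) + C(α̃(x) - λ̄)` and
`b = D(x - μ̄) + H(α̃(x) - λ̄) + (D + D̄)μ̄ + (H + H̄)λ̄`; cross terms with constants integrate to
zero, and expanding the remaining quadratic forms with `Λ` symmetric gives the formula.
-/

open MeasureTheory ProbabilityTheory Matrix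

/-- The `Λ`-weighted variance `Var(ν)(Λ) = ∫ yᵀΛy ν(dy) − ν̄ᵀΛν̄` of a measure on `ℝ^k`. -/
noncomputable def quadVar {k : ℕ} (ν : Measure (Fin k → ℝ)) (Λ : Matrix (Fin k) (Fin k) ℝ) : ℝ :=
  (∫ y, y ⬝ᵥ Λ.mulVec y ∂ν) - (∫ y, y ∂ν) ⬝ᵥ Λ.mulVec (∫ y, y ∂ν)

namespace Matrix

variable {k l n : ℕ}

lemma IsSymm.dotProduct_mulVec_comm {Λ : Matrix (Fin k) (Fin k) ℝ} (hΛ : Λ.IsSymm)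
    (u v : Fin k → ℝ) : u ⬝ᵥ Λ *ᵥ v = v ⬝ᵥ Λ *ᵥ u := by
  rw [dotProduct_mulVec, ← mulVec_transpose, dotProduct_comm, hΛ.eq]

lemma dotProduct_transpose_mul_mul_mulVec (M : Matrix (Fin n) (Fin k) ℝ)
    (Λ : Matrix (Fin n) (Fin n) ℝ) (N : Matrix (Fin n) (Fin l) ℝ) (u : Fin k → ℝ)
    (v : Fin l → ℝ) : u ⬝ᵥ (Mᵀ * Λ * N) *ᵥ v = M *ᵥ u ⬝ᵥ Λ *ᵥ (N *ᵥ v) := by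
  rw [← mulVec_mulVec, ← mulVec_mulVec, dotProduct_mulVec, vecMul_transpose]

lemma IsSymm.mulVec_add_mulVec_dotProduct_mulVec {Λ : Matrix (Fin n) (Fin n) ℝ}
    (hΛ : Λ.IsSymm) (M : Matrix (Fin n) (Fin k) ℝ) (N : Matrix (Fin n) (Fin l) ℝ)
    (u : Fin k → ℝ) (v : Fin l → ℝ) :
    (M *ᵥ u + N *ᵥ v) ⬝ᵥ Λ *ᵥ (M *ᵥ u + N *ᵥ v)
      = u ⬝ᵥ (Mᵀ * Λ * M) *ᵥ u + v ⬝ᵥ (Nᵀ * Λ * N) *ᵥ v + 2 * (u ⬝ᵥ (Mᵀ * Λ * N) *ᵥ v) := by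
  simp only [dotProduct_transpose_mul_mul_mulVec, mulVec_add, dotProduct_add, add_dotProduct,
    hΛ.dotProduct_mulVec_comm (N *ᵥ v) (M *ᵥ u)]
  ring

-- Each term is written as a function of `u, v` times a function of `e`, ready for
-- `integral_prod_mul`.
lemma add_smul_dotProduct_mulVec_add_smul (Λ : Matrix (Fin k) (Fin k) ℝ) (u v : Fin k → ℝ)
    (e : ℝ) : (u + e • v) ⬝ᵥ Λ *ᵥ (u + e • v)
      = u ⬝ᵥ Λ *ᵥ u * 1 + (u ⬝ᵥ Λ *ᵥ v + v ⬝ᵥ Λ *ᵥ u) * e + v ⬝ᵥ Λ *ᵥ v * e ^ 2 := by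
  simp only [mulVec_add, mulVec_smul, dotProduct_add, add_dotProduct, dotProduct_smul,
    smul_dotProduct, smul_eq_mul]
  ring

end Matrix

section Integrals

variable {X : Type*} [MeasurableSpace X] {μ : Measure X} {k l : ℕ}

lemma MeasureTheory.MemLp.mulVec {p : ENNReal} (M : Matrix (Fin k) (Fin l) ℝ)
    {f : X → Fin l → ℝ} (hf : MemLp f p μ) : MemLp (fun x => M *ᵥ f x) p μ :=
  (mulVecLin M).toContinuousLinearMap.comp_memLp' hf

lemma MeasureTheory.Integrable.mulVec (M : Matrix (Fin k) (Fin l) ℝ) {f : X → Fin l → ℝ}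
    (hf : Integrable f μ) : Integrable (fun x => M *ᵥ f x) μ :=
  (mulVecLin M).toContinuousLinearMap.integrable_comp hf

lemma integral_mulVec (M : Matrix (Fin k) (Fin l) ℝ) {f : X → Fin l → ℝ}
    (hf : Integrable f μ) : ∫ x, M *ᵥ f x ∂μ = M *ᵥ ∫ x, f x ∂μ :=
  (mulVecLin M).toContinuousLinearMap.integral_comp_comm hf

lemma integral_dotProduct (c : Fin k → ℝ) {f : X → Fin k → ℝ} (hf : Integrable f μ) :
    ∫ x, c ⬝ᵥ f x ∂μ = c ⬝ᵥ ∫ x, f x ∂μ :=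
  (dotProductBilin ℝ ℝ c).toContinuousLinearMap.integral_comp_comm hf

lemma MeasureTheory.Integrable.const_dotProduct (c : Fin k → ℝ) {f : X → Fin k → ℝ}
    (hf : Integrable f μ) : Integrable (fun x => c ⬝ᵥ f x) μ :=
  (dotProductBilin ℝ ℝ c).toContinuousLinearMap.integrable_comp hf

lemma integrable_dotProduct_mulVec (M : Matrix (Fin k) (Fin l) ℝ) {f : X → Fin k → ℝ}
    {g : X → Fin l → ℝ} (hf : MemLp f 2 μ) (hg : MemLp g 2 μ) :
    Integrable (fun x => f x ⬝ᵥ M *ᵥ g x) μ :=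
  integrable_finsetSum _ fun i _ => (hf.eval i).integrable_mul ((hg.mulVec M).eval i)

lemma integral_dotProduct_mulVec_eq_centered [IsProbabilityMeasure μ]
    (Λ : Matrix (Fin k) (Fin k) ℝ) {f : X → Fin k → ℝ} (hf : MemLp f 2 μ) :
    ∫ x, f x ⬝ᵥ Λ *ᵥ f x ∂μ
      = ∫ x, (f x - ∫ y, f y ∂μ) ⬝ᵥ Λ *ᵥ (f x - ∫ y, f y ∂μ) ∂μ
        + (∫ y, f y ∂μ) ⬝ᵥ Λ *ᵥ ∫ y, f y ∂μ := by
  set m := ∫ y, f y ∂μ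
  have hf₁ : Integrable f μ := hf.integrable one_le_two
  have hΛf : Integrable (fun x => Λ *ᵥ f x) μ := (hf.mulVec Λ).integrable one_le_two
  have hexpand : ∀ x, (f x - m) ⬝ᵥ Λ *ᵥ (f x - m)
      = f x ⬝ᵥ Λ *ᵥ f x - (m ⬝ᵥ Λ *ᵥ f x + (Λ *ᵥ m) ⬝ᵥ f x) + m ⬝ᵥ Λ *ᵥ m := by
    intro x
    simp only [mulVec_sub, dotProduct_sub, sub_dotProduct, dotProduct_comm (Λ *ᵥ m)]
    ring
  have hquad := integrable_dotProduct_mulVec Λ hf hf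
  have hlin := (hΛf.const_dotProduct m).fun_add (hf₁.const_dotProduct (Λ *ᵥ m))
  simp_rw [hexpand]
  rw [integral_add (hquad.sub' hlin) (integrable_const _), integral_sub hquad hlin,
    integral_add (hΛf.const_dotProduct m) (hf₁.const_dotProduct _),
    integral_dotProduct _ hΛf, integral_dotProduct _ hf₁, integral_mulVec _ hf₁,
    dotProduct_comm (Λ *ᵥ m), integral_const, probReal_univ, one_smul]
  ring

lemma Matrix.IsSymm.integral_mulVec_add_mulVec_dotProduct_mulVec_add {n : ℕ}
    {Λ : Matrix (Fin n) (Fin n) ℝ} (hΛ : Λ.IsSymm) (B : Matrix (Fin n) (Fin k) ℝ)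
    (C : Matrix (Fin n) (Fin l) ℝ) (D : Matrix (Fin n) (Fin k) ℝ) (H : Matrix (Fin n) (Fin l) ℝ)
    {u : X → Fin k → ℝ} {v : X → Fin l → ℝ} (hu : MemLp u 2 μ) (hv : MemLp v 2 μ) :
    ∫ x, (B *ᵥ u x + C *ᵥ v x) ⬝ᵥ Λ *ᵥ (B *ᵥ u x + C *ᵥ v x) ∂μ
      + ∫ x, (D *ᵥ u x + H *ᵥ v x) ⬝ᵥ Λ *ᵥ (D *ᵥ u x + H *ᵥ v x) ∂μ
      = ∫ x, u x ⬝ᵥ (Bᵀ * Λ * B + Dᵀ * Λ * D) *ᵥ u x ∂μ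
        + ∫ x, v x ⬝ᵥ (Hᵀ * Λ * H + Cᵀ * Λ * C) *ᵥ v x ∂μ
        + 2 * ∫ x, u x ⬝ᵥ (Dᵀ * Λ * H + Bᵀ * Λ * C) *ᵥ v x ∂μ := by
  have hBC : MemLp (fun x => B *ᵥ u x + C *ᵥ v x) 2 μ := (hu.mulVec B).add (hv.mulVec C)
  have hDH : MemLp (fun x => D *ᵥ u x + H *ᵥ v x) 2 μ := (hu.mulVec D).add (hv.mulVec H)
  have huu := integrable_dotProduct_mulVec (Bᵀ * Λ * B + Dᵀ * Λ * D) hu hu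
  have hvv := integrable_dotProduct_mulVec (Hᵀ * Λ * H + Cᵀ * Λ * C) hv hv
  have huv := integrable_dotProduct_mulVec (Dᵀ * Λ * H + Bᵀ * Λ * C) hu hv
  have hsplit : ∀ x, (B *ᵥ u x + C *ᵥ v x) ⬝ᵥ Λ *ᵥ (B *ᵥ u x + C *ᵥ v x)
      + (D *ᵥ u x + H *ᵥ v x) ⬝ᵥ Λ *ᵥ (D *ᵥ u x + H *ᵥ v x)
      = u x ⬝ᵥ (Bᵀ * Λ * B + Dᵀ * Λ * D) *ᵥ u x + v x ⬝ᵥ (Hᵀ * Λ * H + Cᵀ * Λ * C) *ᵥ v x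
        + 2 * (u x ⬝ᵥ (Dᵀ * Λ * H + Bᵀ * Λ * C) *ᵥ v x) := by
    intro x
    simp only [hΛ.mulVec_add_mulVec_dotProduct_mulVec, add_mulVec, dotProduct_add]
    ring
  rw [← integral_add (integrable_dotProduct_mulVec Λ hBC hBC)
    (integrable_dotProduct_mulVec Λ hDH hDH)]
  simp_rw [hsplit]
  rw [integral_add (huu.fun_add hvv) (huv.const_mul 2), integral_add huu hvv, integral_const_mul]

lemma quadVar_map_eq_integral [IsProbabilityMeasure μ] (Λ : Matrix (Fin k) (Fin k) ℝ)
    {f : X → Fin k → ℝ} (hf : AEMeasurable f μ) (hf₂ : MemLp f 2 μ) :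
    quadVar (μ.map f) Λ = ∫ x, (f x - ∫ y, f y ∂μ) ⬝ᵥ Λ *ᵥ (f x - ∫ y, f y ∂μ) ∂μ := by
  have hq : Measurable fun y : Fin k → ℝ => y ⬝ᵥ Λ *ᵥ y := by fun_prop
  rw [quadVar, integral_map hf hq.aestronglyMeasurable,
    integral_map (f := fun y => y) hf aestronglyMeasurable_id,
    integral_dotProduct_mulVec_eq_centered Λ hf₂, add_sub_cancel_right]

lemma integral_sub_integral_dotProduct_mulVec_sub [IsProbabilityMeasure μ]
    (M : Matrix (Fin k) (Fin l) ℝ) {f : X → Fin k → ℝ} {g : X → Fin l → ℝ} (hf : MemLp f 2 μ)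
    (hg : MemLp g 2 μ) (c : Fin l → ℝ) :
    ∫ x, (f x - ∫ y, f y ∂μ) ⬝ᵥ M *ᵥ (g x - c) ∂μ
      = ∫ x, (f x - ∫ y, f y ∂μ) ⬝ᵥ M *ᵥ g x ∂μ := by
  have hf₁ : Integrable f μ := hf.integrable one_le_two
  have hf₀ : MemLp (fun x => f x - ∫ y, f y ∂μ) 2 μ := hf.sub (memLp_const _)
  simp only [mulVec_sub, dotProduct_sub]
  rw [integral_sub (integrable_dotProduct_mulVec M hf₀ hg)
      (integrable_dotProduct_mulVec M hf₀ (memLp_const c))]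
  simp_rw [dotProduct_comm _ (M *ᵥ c)]
  rw [integral_dotProduct _ (hf₁.sub' (integrable_const _)),
    integral_sub hf₁ (integrable_const _), integral_const, probReal_univ, one_smul, sub_self,
    dotProduct_zero, sub_zero]

end Integrals

section NoisyLaw

variable {X E : Type*} [MeasurableSpace X] {μ : Measure X} {γ : Measure ℝ}

lemma MeasureTheory.Measure.bind_map_eq_map_prod [MeasurableSpace E] [SFinite γ]
    {g : X → ℝ → E} (hg : Measurable (Function.uncurry g)) :
    μ.bind (fun x => γ.map (g x)) = (μ.prod γ).map (Function.uncurry g) := by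
  rw [Measure.prod, Measure.bind, Measure.bind, ← Measure.join_map_map hg,
    Measure.map_map (Measure.measurable_map _ hg) Measurable.map_prodMk_left]
  congr
  funext x
  rw [Function.comp_apply, Measure.map_map hg measurable_prodMk_left]
  rfl

lemma integral_id_bind_map_add_smul [NormedAddCommGroup E] [NormedSpace ℝ E] [CompleteSpace E]
    [MeasurableSpace E] [BorelSpace E] [SecondCountableTopology E]
    [SFinite μ] [IsProbabilityMeasure γ] {a b : X → E} (ha : Measurable a) (hb : Measurable b)
    (ha₁ : Integrable a μ) (hb₁ : Integrable b μ) (hγ : Integrable id γ)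
    (hγ_mean : ∫ e, e ∂γ = 0) :
    ∫ y, y ∂(μ.bind fun x => γ.map fun e => a x + e • b x) = ∫ x, a x ∂μ := by
  have hF : Measurable (Function.uncurry fun x (e : ℝ) => a x + e • b x) :=
    (ha.comp measurable_fst).add (measurable_snd.smul (hb.comp measurable_fst))
  have hF₁ : Integrable (Function.uncurry fun x (e : ℝ) => a x + e • b x) (μ.prod γ) :=
    (ha₁.comp_fst γ).add (hγ.smul_prod hb₁).swap
  rw [Measure.bind_map_eq_map_prod hF,
    integral_map (f := fun y => y) hF.aemeasurable aestronglyMeasurable_id, integral_prod _ hF₁]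
  congr with x
  simp only [Function.uncurry_apply_pair]
  have hγb : Integrable (fun e : ℝ => e • b x) γ := hγ.smul_const (b x)
  rw [integral_add (integrable_const _) hγb, integral_const, integral_smul_const]
  simp [hγ_mean]

lemma integral_dotProduct_mulVec_bind_map_add_smul [SFinite μ] [IsProbabilityMeasure γ] {k : ℕ}
    (Λ : Matrix (Fin k) (Fin k) ℝ) {a b : X → Fin k → ℝ} (ha : Measurable a)
    (hb : Measurable b) (ha₂ : MemLp a 2 μ) (hb₂ : MemLp b 2 μ) (hγ : MemLp id 2 γ)
    (hγ_mean : ∫ e, e ∂γ = 0) (hγ_sq : ∫ e, e ^ 2 ∂γ = 1) :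
    ∫ y, y ⬝ᵥ Λ *ᵥ y ∂(μ.bind fun x => γ.map fun e => a x + e • b x)
      = ∫ x, a x ⬝ᵥ Λ *ᵥ a x ∂μ + ∫ x, b x ⬝ᵥ Λ *ᵥ b x ∂μ := by
  have hF : Measurable (Function.uncurry fun x (e : ℝ) => a x + e • b x) :=
    (ha.comp measurable_fst).add (measurable_snd.smul (hb.comp measurable_fst))
  have hq : Measurable fun y : Fin k → ℝ => y ⬝ᵥ Λ *ᵥ y := by fun_prop
  have haa := integrable_dotProduct_mulVec Λ ha₂ ha₂
  have hab := (integrable_dotProduct_mulVec Λ ha₂ hb₂).fun_add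
    (integrable_dotProduct_mulVec Λ hb₂ ha₂)
  have hbb := integrable_dotProduct_mulVec Λ hb₂ hb₂
  have h₀ : Integrable (fun z : X × ℝ => a z.1 ⬝ᵥ Λ *ᵥ a z.1 * 1) (μ.prod γ) :=
    haa.mul_prod (integrable_const 1)
  have h₁ : Integrable (fun z : X × ℝ => (a z.1 ⬝ᵥ Λ *ᵥ b z.1 + b z.1 ⬝ᵥ Λ *ᵥ a z.1) * z.2)
      (μ.prod γ) := hab.mul_prod (hγ.integrable one_le_two)
  have h₂ : Integrable (fun z : X × ℝ => b z.1 ⬝ᵥ Λ *ᵥ b z.1 * z.2 ^ 2) (μ.prod γ) :=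
    hbb.mul_prod hγ.integrable_sq
  rw [Measure.bind_map_eq_map_prod hF, integral_map hF.aemeasurable hq.aestronglyMeasurable]
  simp only [Function.uncurry_def, add_smul_dotProduct_mulVec_add_smul]
  rw [integral_add (h₀.fun_add h₁) h₂, integral_add h₀ h₁,
    integral_prod_mul (fun x => a x ⬝ᵥ Λ *ᵥ a x) (fun _ => 1),
    integral_prod_mul (fun x => a x ⬝ᵥ Λ *ᵥ b x + b x ⬝ᵥ Λ *ᵥ a x) (fun e => e),
    integral_prod_mul (fun x => b x ⬝ᵥ Λ *ᵥ b x) (fun e => e ^ 2)]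
  simp [hγ_mean, hγ_sq]

lemma quadVar_bind_map_add_smul [IsFiniteMeasure μ] [IsProbabilityMeasure γ] {k : ℕ}
    (Λ : Matrix (Fin k) (Fin k) ℝ) {a b : X → Fin k → ℝ} (ha : Measurable a)
    (hb : Measurable b) (ha₂ : MemLp a 2 μ) (hb₂ : MemLp b 2 μ) (hγ : MemLp id 2 γ)
    (hγ_mean : ∫ e, e ∂γ = 0) (hγ_sq : ∫ e, e ^ 2 ∂γ = 1) :
    quadVar (μ.bind fun x => γ.map fun e => a x + e • b x) Λ
      = quadVar (μ.map a) Λ + ∫ x, b x ⬝ᵥ Λ *ᵥ b x ∂μ := by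
  have hq : Measurable fun y : Fin k → ℝ => y ⬝ᵥ Λ *ᵥ y := by fun_prop
  rw [quadVar, quadVar,
    integral_dotProduct_mulVec_bind_map_add_smul Λ ha hb ha₂ hb₂ hγ hγ_mean hγ_sq,
    integral_id_bind_map_add_smul ha hb (ha₂.integrable one_le_two) (hb₂.integrable one_le_two)
      (hγ.integrable one_le_two) hγ_mean,
    integral_map ha.aemeasurable hq.aestronglyMeasurable,
    integral_map (f := fun y => y) ha.aemeasurable aestronglyMeasurable_id]
  ring

lemma integral_sq_gaussianReal_zero (v : NNReal) : ∫ x, x ^ 2 ∂gaussianReal 0 v = v := by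
  rw [← variance_fun_id_gaussianReal (μ := 0),
    variance_of_integral_eq_zero aemeasurable_id' integral_id_gaussianReal]

end NoisyLaw

section SquareIntegrable

variable {X E F : Type*} [MeasurableSpace X] {μ : Measure X} [NormedAddCommGroup E]
  [NormedAddCommGroup F]

lemma memLp_two_of_lintegral_nnnorm_sq_lt_top {f : X → E} (hf : AEStronglyMeasurable f μ)
    (h : ∫⁻ x, (‖f x‖₊ : ENNReal) ^ 2 ∂μ < ⊤) : MemLp f 2 μ := by
  refine ⟨hf, (eLpNorm_lt_top_iff_lintegral_rpow_enorm_lt_top two_ne_zero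
    ENNReal.ofNat_ne_top).2 ?_⟩
  simpa only [ENNReal.toReal_ofNat, ENNReal.rpow_two, enorm_eq_nnnorm] using h

lemma MeasureTheory.MemLp.of_le_mul_one_add_norm [IsFiniteMeasure μ] {p : ENNReal} {g : X → E}
    {f : X → F} (hg : MemLp g p μ) (hf : AEStronglyMeasurable f μ) (K : ℝ)
    (h : ∀ x, ‖f x‖ ≤ K * (1 + ‖g x‖)) : MemLp f p μ := by
  have hbound : MemLp (fun x => K * (1 + ‖g x‖)) p μ :=
    ((memLp_const (1 : ℝ)).add hg.norm).const_mul K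
  exact hbound.of_le hf (ae_of_all _ fun x => (h x).trans (Real.le_norm_self _))

end SquareIntegrable

section LinearQuadratic

variable {d m : ℕ} {μ : Measure (Fin d → ℝ)} {α : (Fin d → ℝ) → Fin m → ℝ}

-- Both coefficients of the transition, `Bx + B̄μ̄ + Cα̃(x) + C̄λ̄` and `Dx + D̄μ̄ + Hα̃(x) + H̄λ̄`,
-- have this shape.
def lqCoeff (M M' : Matrix (Fin d) (Fin d) ℝ) (N N' : Matrix (Fin d) (Fin m) ℝ)
    (μbar : Fin d → ℝ) (lbar : Fin m → ℝ) (α : (Fin d → ℝ) → Fin m → ℝ) (x : Fin d → ℝ) :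
    Fin d → ℝ :=
  M *ᵥ x + M' *ᵥ μbar + N *ᵥ α x + N' *ᵥ lbar

variable (M M' : Matrix (Fin d) (Fin d) ℝ) (N N' : Matrix (Fin d) (Fin m) ℝ)

lemma measurable_lqCoeff (μbar : Fin d → ℝ) (lbar : Fin m → ℝ) (hα : Measurable α) :
    Measurable (lqCoeff M M' N N' μbar lbar α) := by
  unfold lqCoeff
  fun_prop

lemma memLp_lqCoeff [IsFiniteMeasure μ] (μbar : Fin d → ℝ) (lbar : Fin m → ℝ)
    (hx : MemLp id 2 μ) (hα : MemLp α 2 μ) : MemLp (lqCoeff M M' N N' μbar lbar α) 2 μ :=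
  (((hx.mulVec M).add (memLp_const _)).add (hα.mulVec N)).add (memLp_const _)

lemma integral_lqCoeff [IsProbabilityMeasure μ] (hx : Integrable id μ) (hα : Integrable α μ) :
    ∫ x, lqCoeff M M' N N' (∫ x, x ∂μ) (∫ x, α x ∂μ) α x ∂μ
      = (M + M') *ᵥ ∫ x, x ∂μ + (N + N') *ᵥ ∫ x, α x ∂μ := by
  have hMx : Integrable (fun x => M *ᵥ x) μ := hx.mulVec M
  have hNα : Integrable (fun x => N *ᵥ α x) μ := hα.mulVec N
  unfold lqCoeff
  rw [integral_add ((hMx.fun_add (integrable_const _)).fun_add hNα) (integrable_const _),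
    integral_add (hMx.fun_add (integrable_const _)) hNα, integral_add hMx (integrable_const _),
    integral_mulVec (f := fun x => x) M hx, integral_mulVec N hα]
  simp only [integral_const, probReal_univ, one_smul, add_mulVec]
  abel

lemma lqCoeff_sub (μbar : Fin d → ℝ) (lbar : Fin m → ℝ) (x : Fin d → ℝ) :
    lqCoeff M M' N N' μbar lbar α x - ((M + M') *ᵥ μbar + (N + N') *ᵥ lbar)
      = M *ᵥ (x - μbar) + N *ᵥ (α x - lbar) := by
  simp only [lqCoeff, add_mulVec, mulVec_sub]
  abel

lemma integral_centered_lq_dotProduct_mulVec [IsProbabilityMeasure μ]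
    {Λ : Matrix (Fin d) (Fin d) ℝ} (hΛ : Λ.IsSymm) (B D : Matrix (Fin d) (Fin d) ℝ)
    (C H : Matrix (Fin d) (Fin m) ℝ)
    (hx : MemLp id 2 μ) (hαm : AEMeasurable α μ) (hα : MemLp α 2 μ) :
    ∫ x, (B *ᵥ (x - ∫ y, y ∂μ) + C *ᵥ (α x - ∫ y, α y ∂μ)) ⬝ᵥ
        Λ *ᵥ (B *ᵥ (x - ∫ y, y ∂μ) + C *ᵥ (α x - ∫ y, α y ∂μ)) ∂μ
      + ∫ x, (D *ᵥ (x - ∫ y, y ∂μ) + H *ᵥ (α x - ∫ y, α y ∂μ)) ⬝ᵥ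
        Λ *ᵥ (D *ᵥ (x - ∫ y, y ∂μ) + H *ᵥ (α x - ∫ y, α y ∂μ)) ∂μ
      = quadVar μ (Bᵀ * Λ * B + Dᵀ * Λ * D) + quadVar (μ.map α) (Hᵀ * Λ * H + Cᵀ * Λ * C)
        + 2 * ∫ x, (x - ∫ y, y ∂μ) ⬝ᵥ (Dᵀ * Λ * H + Bᵀ * Λ * C) *ᵥ α x ∂μ := by
  have hu : MemLp (fun x => x - ∫ y, y ∂μ) 2 μ := hx.sub (memLp_const _)
  have hv : MemLp (fun x => α x - ∫ y, α y ∂μ) 2 μ := hα.sub (memLp_const _)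
  refine (hΛ.integral_mulVec_add_mulVec_dotProduct_mulVec_add B C D H hu hv).trans ?_
  have hquadVar_μ := quadVar_map_eq_integral (Bᵀ * Λ * B + Dᵀ * Λ * D) aemeasurable_id hx
  rw [Measure.map_id] at hquadVar_μ
  rw [hquadVar_μ, quadVar_map_eq_integral _ hαm hα,
    integral_sub_integral_dotProduct_mulVec_sub _ (f := fun x => x) hx hα]
  rfl

end LinearQuadratic

/-- Mean and `Λ`-weighted variance of the linear-quadratic McKean-Vlasov transition
`Φ(μ,α̃) = Law((Bx + B̄μ̄ + Cα̃(x) + C̄λ̄) + (Dx + D̄μ̄ + Hα̃(x) + H̄λ̄) ε)`, `x ∼ μ`,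
`ε ∼ N(0,1)` independent, with `μ̄ = ∫x μ(dx)` and `λ̄ = ∫α̃ dμ`. -/
theorem lq_transition_mean_and_variance {d m : ℕ}
    (B Bb D Db : Matrix (Fin d) (Fin d) ℝ) (C Cb H Hb : Matrix (Fin d) (Fin m) ℝ)
    (μ : Measure (Fin d → ℝ)) [IsProbabilityMeasure μ]
    (hμ2 : ∫⁻ x, (‖x‖₊ : ENNReal) ^ 2 ∂μ < ⊤)
    (α : (Fin d → ℝ) → Fin m → ℝ) (hαm : Measurable α)
    (hαgrowth : ∃ Cα : ℝ, ∀ x, ‖α x‖ ≤ Cα * (1 + ‖x‖))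
    (μbar : Fin d → ℝ) (hμbar : μbar = ∫ x, x ∂μ)
    (lbar : Fin m → ℝ) (hlbar : lbar = ∫ x, α x ∂μ)
    (Φ : Measure (Fin d → ℝ))
    (hΦ : Φ = μ.bind (fun x => (gaussianReal 0 1).map (fun e =>
      (B.mulVec x + Bb.mulVec μbar + C.mulVec (α x) + Cb.mulVec lbar)
        + e • (D.mulVec x + Db.mulVec μbar + H.mulVec (α x) + Hb.mulVec lbar)))) :
    (∫ x', x' ∂Φ) = (B + Bb).mulVec μbar + (C + Cb).mulVec lbar
    ∧ ∀ Λ : Matrix (Fin d) (Fin d) ℝ, Λ.IsSymm →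
      quadVar Φ Λ
        = quadVar μ (Bᵀ * Λ * B + Dᵀ * Λ * D)
          + μbar ⬝ᵥ ((D + Db)ᵀ * Λ * (D + Db)).mulVec μbar
          + quadVar (μ.map α) (Hᵀ * Λ * H + Cᵀ * Λ * C)
          + lbar ⬝ᵥ ((H + Hb)ᵀ * Λ * (H + Hb)).mulVec lbar
          + 2 * ∫ x, (x - μbar) ⬝ᵥ (Dᵀ * Λ * H + Bᵀ * Λ * C).mulVec (α x) ∂μ
          + 2 * (μbar ⬝ᵥ ((D + Db)ᵀ * Λ * (H + Hb)).mulVec lbar) := by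
  obtain ⟨K, hK⟩ := hαgrowth
  have hx : MemLp id 2 μ := memLp_two_of_lintegral_nnnorm_sq_lt_top aestronglyMeasurable_id hμ2
  have hα : MemLp α 2 μ := hx.of_le_mul_one_add_norm hαm.aestronglyMeasurable K hK
  have hγ : MemLp id 2 (gaussianReal 0 1) := memLp_id_gaussianReal 2
  subst hμbar hlbar
  replace hΦ : Φ = μ.bind fun x => (gaussianReal 0 1).map fun e =>
      lqCoeff B Bb C Cb (∫ x, x ∂μ) (∫ x, α x ∂μ) α x
        + e • lqCoeff D Db H Hb (∫ x, x ∂μ) (∫ x, α x ∂μ) α x := hΦ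
  subst hΦ
  have hmeas := fun M M' N N' => measurable_lqCoeff M M' N N' (∫ x, x ∂μ) (∫ x, α x ∂μ) hαm
  have hL2 := fun M M' N N' => memLp_lqCoeff M M' N N' (∫ x, x ∂μ) (∫ x, α x ∂μ) hx hα
  have hmean := fun M M' N N' => integral_lqCoeff M M' N N'
    (hx.integrable one_le_two) (hα.integrable one_le_two)
  refine ⟨?_, fun Λ hΛ => ?_⟩
  · rw [integral_id_bind_map_add_smul (hmeas _ _ _ _) (hmeas _ _ _ _)
      ((hL2 _ _ _ _).integrable one_le_two) ((hL2 _ _ _ _).integrable one_le_two)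
      (hγ.integrable one_le_two) integral_id_gaussianReal, hmean]
  · rw [quadVar_bind_map_add_smul Λ (hmeas _ _ _ _) (hmeas _ _ _ _) (hL2 _ _ _ _) (hL2 _ _ _ _) hγ
        integral_id_gaussianReal (integral_sq_gaussianReal_zero 1),
      quadVar_map_eq_integral Λ (hmeas _ _ _ _).aemeasurable (hL2 _ _ _ _),
      integral_dotProduct_mulVec_eq_centered Λ (hL2 _ _ _ _), hmean, hmean]
    simp only [lqCoeff_sub]
    rw [← add_assoc, integral_centered_lq_dotProduct_mulVec hΛ B D C H hx hαm.aemeasurable hα,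
      hΛ.mulVec_add_mulVec_dotProduct_mulVec]
    ring
end

section
/- The Riccati update for the linear-quadratic McKean-Vlasov problem preserves symmetry and nonnegativity: if Λ_{k+1}, Γ_{k+1} are symmetric nonnegative d×d matrices and V_k := R_k + H_kᵀΛ_{k+1}H_k + C_kᵀΛ_{k+1}C_k and W_k := R_k + R̄_k + (C_k+C̄_k)ᵀΓ_{k+1}(C_k+C̄_k) + (H_k+H̄_k)ᵀΛ_{k+1}(H_k+H̄_k) are positive definite, then Λ_k := Q_k + B_kᵀΛ_{k+1}B_k + D_kᵀΛ_{k+1}D_k − S_kV_k⁻¹S_kᵀ with S_k := D_kᵀΛ_{k+1}H_k + B_kᵀΛ_{k+1}C_k, and Γ_k := (Q_k+Q̄_k) + (B_k+B̄_k)ᵀΓ_{k+1}(B_k+B̄_k) + (D_k+D̄_k)ᵀΛ_{k+1}(D_k+D̄_k) − T_kW_k⁻¹T_kᵀ with T_k := (D_k+D̄_k)ᵀΛ_{k+1}(H_k+H̄_k) + (B_k+B̄_k)ᵀΓ_{k+1}(C_k+C̄_k), are symmetric nonnegative, provided Q_k ≥ 0, Q_k+Q̄_k ≥ 0, R_k ≥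 0, R_k+R̄_k ≥ 0. -/
open Matrix

lemma riccati_aux {d m : ℕ}
    (Q : Matrix (Fin d) (Fin d) ℝ) (R : Matrix (Fin m) (Fin m) ℝ)
    (B D : Matrix (Fin d) (Fin d) ℝ) (C H : Matrix (Fin d) (Fin m) ℝ)
    (M N : Matrix (Fin d) (Fin d) ℝ)
    (hM : M.PosSemidef) (hN : N.PosSemidef) (hQ : Q.PosSemidef) (hR : R.PosSemidef)
    (V : Matrix (Fin m) (Fin m) ℝ) (hV : V = R + Hᵀ * N * H + Cᵀ * M * C)
    (hVpos : V.PosDef)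
    (S : Matrix (Fin d) (Fin m) ℝ) (hS : S = Dᵀ * N * H + Bᵀ * M * C) :
    (Q + Bᵀ * M * B + Dᵀ * N * D - S * V⁻¹ * Sᵀ).PosSemidef := by
  have hMs : Mᵀ = M := by
    have := hM.isHermitian.eq; rwa [conjTranspose_eq_transpose_of_trivial] at this
  have hNs : Nᵀ = N := by
    have := hN.isHermitian.eq; rwa [conjTranspose_eq_transpose_of_trivial] at this
  have hRs : Rᵀ = R := by
    have := hR.isHermitian.eq; rwa [conjTranspose_eq_transpose_of_trivial] at this
  have hVs : Vᵀ = V := by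
    have := hVpos.posSemidef.isHermitian.eq
    rwa [conjTranspose_eq_transpose_of_trivial] at this
  have hdet : IsUnit V.det := isUnit_iff_ne_zero.mpr hVpos.det_pos.ne'
  have hVinv : (V⁻¹)ᵀ = V⁻¹ := by rw [transpose_nonsing_inv, hVs]
  set K := S * V⁻¹ with hK
  have hKt : Kᵀ = V⁻¹ * Sᵀ := by rw [hK, transpose_mul, hVinv]
  have hKV : K * V = S := by
    rw [hK, Matrix.mul_assoc, Matrix.nonsing_inv_mul V hdet, Matrix.mul_one]
  have h1 : S * Kᵀ = S * V⁻¹ * Sᵀ := by rw [hKt, Matrix.mul_assoc]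
  have h2 : K * Sᵀ = S * V⁻¹ * Sᵀ := by rw [hK]
  have h3 : K * V * Kᵀ = S * V⁻¹ * Sᵀ := by rw [hKV, h1]
  have expand : (B - C * Kᵀ)ᵀ * M * (B - C * Kᵀ) + (D - H * Kᵀ)ᵀ * N * (D - H * Kᵀ)
      + K * R * Kᵀ
      = Bᵀ * M * B + Dᵀ * N * D + K * V * Kᵀ - S * Kᵀ - K * Sᵀ := by
    rw [hV, hS]
    simp only [transpose_sub, transpose_mul, transpose_transpose, transpose_add,
      hMs, hNs, Matrix.sub_mul, Matrix.mul_sub, Matrix.add_mul, Matrix.mul_add,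
      Matrix.mul_assoc]
    abel
  have main : Q + Bᵀ * M * B + Dᵀ * N * D - S * V⁻¹ * Sᵀ
      = Q + ((B - C * Kᵀ)ᵀ * M * (B - C * Kᵀ) + ((D - H * Kᵀ)ᵀ * N * (D - H * Kᵀ)
      + K * R * Kᵀ)) := by
    have := expand
    rw [h1, h2, h3] at this
    rw [show (B - C * Kᵀ)ᵀ * M * (B - C * Kᵀ) + ((D - H * Kᵀ)ᵀ * N * (D - H * Kᵀ)
      + K * R * Kᵀ) = (B - C * Kᵀ)ᵀ * M * (B - C * Kᵀ) + (D - H * Kᵀ)ᵀ * N * (D - H * Kᵀ)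
      + K * R * Kᵀ by abel, this]
    abel
  rw [main]
  have pB : ((B - C * Kᵀ)ᵀ * M * (B - C * Kᵀ)).PosSemidef := by
    have := hM.conjTranspose_mul_mul_same (B - C * Kᵀ)
    rwa [conjTranspose_eq_transpose_of_trivial] at this
  have pD : ((D - H * Kᵀ)ᵀ * N * (D - H * Kᵀ)).PosSemidef := by
    have := hN.conjTranspose_mul_mul_same (D - H * Kᵀ)
    rwa [conjTranspose_eq_transpose_of_trivial] at this
  have pK : (K * R * Kᵀ).PosSemidef := by
    have := hR.mul_mul_conjTranspose_same K
    rwa [conjTranspose_eq_transpose_of_trivial] at this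
  exact hQ.add (pB.add (pD.add pK))

/-- The Riccati update for the linear-quadratic McKean-Vlasov problem preserves symmetry and
nonnegativity of `(Λ_k, Γ_k)`. -/
theorem riccati_update_posSemidef {d m : ℕ}
    (Q Qb : Matrix (Fin d) (Fin d) ℝ) (R Rb : Matrix (Fin m) (Fin m) ℝ)
    (B Bb D Db : Matrix (Fin d) (Fin d) ℝ) (C Cb H Hb : Matrix (Fin d) (Fin m) ℝ)
    (Λ' Γ' : Matrix (Fin d) (Fin d) ℝ)
    (hΛ' : Λ'.PosSemidef) (hΓ' : Γ'.PosSemidef)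
    (hQ : Q.PosSemidef) (hQQb : (Q + Qb).PosSemidef)
    (hR : R.PosSemidef) (hRRb : (R + Rb).PosSemidef)
    (V : Matrix (Fin m) (Fin m) ℝ) (hV : V = R + Hᵀ * Λ' * H + Cᵀ * Λ' * C)
    (W : Matrix (Fin m) (Fin m) ℝ)
    (hW : W = R + Rb + (C + Cb)ᵀ * Γ' * (C + Cb) + (H + Hb)ᵀ * Λ' * (H + Hb))
    (hVpos : V.PosDef) (hWpos : W.PosDef)
    (S : Matrix (Fin d) (Fin m) ℝ) (hS : S = Dᵀ * Λ' * H + Bᵀ * Λ' * C)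
    (T : Matrix (Fin d) (Fin m) ℝ)
    (hT : T = (D + Db)ᵀ * Λ' * (H + Hb) + (B + Bb)ᵀ * Γ' * (C + Cb))
    (Λ : Matrix (Fin d) (Fin d) ℝ)
    (hΛ : Λ = Q + Bᵀ * Λ' * B + Dᵀ * Λ' * D - S * V⁻¹ * Sᵀ)
    (Γ : Matrix (Fin d) (Fin d) ℝ)
    (hΓ : Γ = (Q + Qb) + (B + Bb)ᵀ * Γ' * (B + Bb) + (D + Db)ᵀ * Λ' * (D + Db)
              - T * W⁻¹ * Tᵀ) :
    Λ.PosSemidef ∧ Γ.PosSemidef := by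
  constructor
  · rw [hΛ]
    exact riccati_aux Q R B D C H Λ' Λ' hΛ' hΛ' hQ hR V
      hV hVpos S hS
  · rw [hΓ]
    exact riccati_aux (Q + Qb) (R + Rb) (B + Bb) (D + Db) (C + Cb) (H + Hb) Γ' Λ'
      hΓ' hΛ' hQQb hRRb W (by rw [hW]; abel) hWpos T hT
end

section
/- For the mean-variance Riccati system with terminal data Λ_n = γ/2, Γ_n = 0, ρ_n = −1, χ_n = 0 and backward recursions Λ_k = Λ_{k+1}·σ²/(σ²+b²Δ), Γ_k = σ²Λ_{k+1}Γ_{k+1}/(σ²Λ_{k+1}+b²ΔΓ_{k+1}), ρ_k = σ²Λ_{k+1}ρ_{k+1}/(b²ΔΓ_{k+1}+σ²Λ_{k+1}), χ_k = χ_{k+1} − (1/4)·b²Δρ_{k+1}²/(σ²Λ_{k+1}+b²ΔΓ_{k+1}), the explicit solution for k = 0,…,n is Λ_k = (γ/2)(σ²/(σ²+b²Δ))^{n−k}, Γ_k = 0, ρ_k = −1, and χ_k = −(1/(2γ))·(((σ²+b²Δ)/σ²)^{n−k} − 1). -/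
/-!
Backward induction from `k = n`: since `Γ_n = 0`, the `Γ` recursion keeps `Γ_k = 0`, which turns
the `ρ` recursion into `ρ_k = ρ_{k+1}` and the `χ` recursion into
`χ_k = χ_{k+1} - b²Δ / (4σ²Λ_{k+1})`. With `Λ_k` geometric of ratio `q = σ²/(σ²+b²Δ)`, these
increments form a geometric sum in `1/q = 1 + b²Δ/σ²`.
-/

theorem riccati_chi_closed_form_succ {a c γ : ℝ} (ha : a ≠ 0) (hγ : γ ≠ 0) (d : ℕ) :
    -(1 / (2 * γ)) * (((a + c) / a) ^ d - 1) - 1 / 4 * (c / (a * (γ / 2 * (a / (a + c)) ^ d)))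
      = -(1 / (2 * γ)) * (((a + c) / a) ^ (d + 1) - 1) := by
  simp only [div_pow]
  field_simp
  ring

theorem mean_variance_riccati_explicit_general
    (n : ℕ) (γ b σ Δ : ℝ) (hγ : 0 < γ) (hσ : 0 < σ) (hΔ : 0 < Δ)
    (Λ Γ ρ χ : ℕ → ℝ)
    (hΛn : Λ n = γ / 2) (hΓn : Γ n = 0) (hρn : ρ n = -1) (hχn : χ n = 0)
    (hΛ : ∀ k < n, Λ k = Λ (k + 1) * (σ ^ 2 / (σ ^ 2 + b ^ 2 * Δ)))
    (hΓ : ∀ k < n, Γ k = σ ^ 2 * Λ (k + 1) * Γ (k + 1) / (σ ^ 2 * Λ (k + 1) + b ^ 2 * Δ * Γ (k + 1)))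
    (hρ : ∀ k < n, ρ k = σ ^ 2 * Λ (k + 1) * ρ (k + 1) / (b ^ 2 * Δ * Γ (k + 1) + σ ^ 2 * Λ (k + 1)))
    (hχ : ∀ k < n, χ k = χ (k + 1)
          - (1 / 4) * (b ^ 2 * Δ * ρ (k + 1) ^ 2 / (σ ^ 2 * Λ (k + 1) + b ^ 2 * Δ * Γ (k + 1)))) :
    ∀ k ≤ n,
      Λ k = (γ / 2) * (σ ^ 2 / (σ ^ 2 + b ^ 2 * Δ)) ^ (n - k)
      ∧ Γ k = 0
      ∧ ρ k = -1
      ∧ χ k = -(1 / (2 * γ)) * (((σ ^ 2 + b ^ 2 * Δ) / σ ^ 2) ^ (n - k) - 1) := by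
  have hσ2 : σ ^ 2 ≠ 0 := by positivity
  intro k hk
  induction hk using Nat.decreasingInduction with
  | self => simp [hΛn, hΓn, hρn, hχn]
  | of_succ k hkn ih =>
    obtain ⟨hΛk, hΓk, hρk, hχk⟩ := ih
    have hexp : n - k = n - (k + 1) + 1 := by omega
    have hσΛ : σ ^ 2 * Λ (k + 1) ≠ 0 := by rw [hΛk]; positivity
    refine ⟨?_, ?_, ?_, ?_⟩
    · rw [hΛ k hkn, hΛk, hexp, pow_succ _ (n - (k + 1)), mul_assoc]
    · rw [hΓ k hkn, hΓk, mul_zero, zero_div]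
    · rw [hρ k hkn, hΓk, hρk, mul_zero, zero_add, mul_neg_one, neg_div_self hσΛ]
    · rw [hχ k hkn, hΓk, hρk, hχk, hΛk, hexp, mul_zero, add_zero, neg_one_sq, mul_one]
      exact riccati_chi_closed_form_succ hσ2 hγ.ne' _

/-- Explicit solution of the mean-variance Riccati system. -/
theorem mean_variance_riccati_explicit
    (n : ℕ) (γ b σ Δ : ℝ) (hγ : 0 < γ) (hb : 0 < b) (hσ : 0 < σ) (hΔ : 0 < Δ)
    (Λ Γ ρ χ : ℕ → ℝ)
    (hΛn : Λ n = γ / 2) (hΓn : Γ n = 0) (hρn : ρ n = -1) (hχn : χ n = 0)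
    (hΛ : ∀ k < n, Λ k = Λ (k + 1) * (σ ^ 2 / (σ ^ 2 + b ^ 2 * Δ)))
    (hΓ : ∀ k < n, Γ k = σ ^ 2 * Λ (k + 1) * Γ (k + 1) / (σ ^ 2 * Λ (k + 1) + b ^ 2 * Δ * Γ (k + 1)))
    (hρ : ∀ k < n, ρ k = σ ^ 2 * Λ (k + 1) * ρ (k + 1) / (b ^ 2 * Δ * Γ (k + 1) + σ ^ 2 * Λ (k + 1)))
    (hχ : ∀ k < n, χ k = χ (k + 1)
          - (1 / 4) * (b ^ 2 * Δ * ρ (k + 1) ^ 2 / (σ ^ 2 * Λ (k + 1) + b ^ 2 * Δ * Γ (k + 1)))) :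
    ∀ k ≤ n,
      Λ k = (γ / 2) * (σ ^ 2 / (σ ^ 2 + b ^ 2 * Δ)) ^ (n - k)
      ∧ Γ k = 0
      ∧ ρ k = -1
      ∧ χ k = -(1 / (2 * γ)) * (((σ ^ 2 + b ^ 2 * Δ) / σ ^ 2) ^ (n - k) - 1) :=
  mean_variance_riccati_explicit_general n γ b σ Δ hγ hσ hΔ Λ Γ ρ χ hΛn hΓn hρn hχn hΛ hΓ hρ hχ
end
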